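/- The frequency-based characterization and the DP characterization agree: for every cell (i,j), dp(i,j) (from the standard three-way-min recurrence) equals the largest k such that freq_i(j - t) ≥ k for all t < k (with k ≤ j + 1), where freq_i is the column run-length function. -/

import Mathlib

/-!
Both sides describe the side of the largest all-true square with bottom-right corner `(i, j)`.
A `(k+1)`-square fits at an interior cell exactly when the cell is true and `k`-squares fit at
its three neighbours up, left and up-left, which is the three-way-min recurrence. On the other
side, a `k`-square fits exactly when each of the `k` columns `j, j - 1, …, j - k + 1` has a run
of at least `k` trues ending in row `i`, that is, when `freq_i (j - t) ≥ k` for every `t < k`.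
-/

theorem IsGreatest.le_iff_mem_of_isLowerSet {α : Type*} [Preorder α] {s : Set α} {a b : α}
    (h : IsGreatest s a) (hs : IsLowerSet s) : b ≤ a ↔ b ∈ s :=
  ⟨fun hb => hs hb h.1, fun hb => h.2 hb⟩

namespace Fin

variable {m : ℕ}

def truncSub (i : Fin m) (t : ℕ) : Fin m :=
  ⟨i.val - t, Nat.lt_of_le_of_lt (Nat.sub_le _ _) i.isLt⟩

@[simp]
theorem val_truncSub (i : Fin m) (t : ℕ) : (i.truncSub t).val = i.val - t := rfl

@[simp]
theorem truncSub_zero (i : Fin m) : i.truncSub 0 = i := Fin.ext (Nat.sub_zero _)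

@[simp]
theorem truncSub_truncSub (i : Fin m) (s t : ℕ) :
    (i.truncSub s).truncSub t = i.truncSub (t + s) :=
  Fin.ext (by simp only [val_truncSub]; omega)

end Fin

section Squares

variable {m n : ℕ} (M : Fin m → Fin n → Bool)

def OnesSquare (i : Fin m) (j : Fin n) (k : ℕ) : Prop :=
  k ≤ i.val + 1 ∧ k ≤ j.val + 1 ∧
    ∀ a < k, ∀ b < k, M (i.truncSub a) (j.truncSub b) = true

def ColumnRun (i : Fin m) (j : Fin n) (l : ℕ) : Prop :=
  l ≤ i.val + 1 ∧ ∀ t < l, M (i.truncSub t) j = true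

def SquareRecurrence (dp : Fin m → Fin n → ℕ) : Prop :=
  ∀ (i : Fin m) (j : Fin n),
    dp i j =
      if M i j = false then 0
      else if i.val = 0 ∨ j.val = 0 then 1
      else
        min (min (dp (i.truncSub 1) j) (dp i (j.truncSub 1)))
          (dp (i.truncSub 1) (j.truncSub 1)) + 1

variable {M}

theorem isLowerSet_columnRun (i : Fin m) (j : Fin n) : IsLowerSet {l | ColumnRun M i j l} :=
  fun _ _ hle ⟨hl, hrun⟩ => ⟨hle.trans hl, fun t ht => hrun t (ht.trans_le hle)⟩

theorem onesSquare_iff_forall_columnRun {i : Fin m} {j : Fin n} {k : ℕ} :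
    OnesSquare M i j k ↔ k ≤ j.val + 1 ∧ ∀ t < k, ColumnRun M i (j.truncSub t) k := by
  constructor
  · rintro ⟨hki, hkj, hM⟩
    exact ⟨hkj, fun t ht => ⟨hki, fun a ha => hM a ha t ht⟩⟩
  · rintro ⟨hkj, hcol⟩
    refine ⟨?_, hkj, fun a ha b hb => (hcol b hb).2 a ha⟩
    rcases Nat.eq_zero_or_pos k with rfl | hk
    · exact Nat.zero_le _
    · exact (hcol 0 hk).1

theorem OnesSquare.mono {i : Fin m} {j : Fin n} {k k' : ℕ} (h : OnesSquare M i j k)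
    (hk : k' ≤ k) : OnesSquare M i j k' :=
  ⟨hk.trans h.1, hk.trans h.2.1,
    fun a ha b hb => h.2.2 a (ha.trans_le hk) b (hb.trans_le hk)⟩

theorem onesSquare_succ_iff {i : Fin m} {j : Fin n} {k : ℕ} (hi : 0 < i.val) (hj : 0 < j.val) :
    OnesSquare M i j (k + 1) ↔ M i j = true ∧ OnesSquare M (i.truncSub 1) j k ∧
      OnesSquare M i (j.truncSub 1) k ∧ OnesSquare M (i.truncSub 1) (j.truncSub 1) k := by
  simp only [OnesSquare, Fin.val_truncSub, Fin.truncSub_truncSub]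
  constructor
  · rintro ⟨hki, hkj, hM⟩
    refine ⟨by simpa using hM 0 (by omega) 0 (by omega),
      ⟨by omega, by omega, fun a ha b hb => hM (a + 1) (by omega) b (by omega)⟩,
      ⟨by omega, by omega, fun a ha b hb => hM a (by omega) (b + 1) (by omega)⟩,
      ⟨by omega, by omega, fun a ha b hb => hM (a + 1) (by omega) (b + 1) (by omega)⟩⟩
  · rintro ⟨hM, ⟨hki, -, hup⟩, ⟨-, hkj, hleft⟩, ⟨-, -, hdiag⟩⟩
    refine ⟨by omega, by omega, fun a ha b hb => ?_⟩
    rcases a with _ | a <;> rcases b with _ | b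
    · simpa using hM
    · simpa using hleft 0 (by omega) b (by omega)
    · simpa using hup a (by omega) 0 (by omega)
    · exact hdiag a (by omega) b (by omega)

theorem isGreatest_onesSquare_of_false {i : Fin m} {j : Fin n} (h : M i j = false) :
    IsGreatest {k | OnesSquare M i j k} 0 := by
  refine ⟨⟨Nat.zero_le _, Nat.zero_le _, fun a ha => absurd ha (Nat.not_lt_zero a)⟩, ?_⟩
  rintro k ⟨-, -, hM⟩
  by_contra! hk
  simpa [h] using hM 0 hk 0 hk

theorem isGreatest_onesSquare_of_border {i : Fin m} {j : Fin n} (h : M i j = true)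
    (hborder : i.val = 0 ∨ j.val = 0) : IsGreatest {k | OnesSquare M i j k} 1 := by
  refine ⟨⟨by omega, by omega, fun a ha b hb => ?_⟩, fun k ⟨hki, hkj, _⟩ => by omega⟩
  obtain rfl : a = 0 := by omega
  obtain rfl : b = 0 := by omega
  simpa using h

theorem isGreatest_onesSquare_min_add_one {i : Fin m} {j : Fin n} {d₁ d₂ d₃ : ℕ}
    (hi : 0 < i.val) (hj : 0 < j.val) (h : M i j = true)
    (hup : IsGreatest {k | OnesSquare M (i.truncSub 1) j k} d₁)
    (hleft : IsGreatest {k | OnesSquare M i (j.truncSub 1) k} d₂)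
    (hdiag : IsGreatest {k | OnesSquare M (i.truncSub 1) (j.truncSub 1) k} d₃) :
    IsGreatest {k | OnesSquare M i j k} (min (min d₁ d₂) d₃ + 1) := by
  refine ⟨(onesSquare_succ_iff hi hj).2 ⟨h, hup.1.mono (by omega), hleft.1.mono (by omega),
    hdiag.1.mono (by omega)⟩, fun k hk => ?_⟩
  rcases k with _ | k
  · omega
  · obtain ⟨-, hk₁, hk₂, hk₃⟩ := (onesSquare_succ_iff hi hj).1 hk
    have := hup.2 hk₁
    have := hleft.2 hk₂
    have := hdiag.2 hk₃
    omega

theorem SquareRecurrence.isGreatest_onesSquare {dp : Fin m → Fin n → ℕ}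
    (hdp : SquareRecurrence M dp) (i : Fin m) (j : Fin n) :
    IsGreatest {k | OnesSquare M i j k} (dp i j) := by
  induction hN : i.val + j.val using Nat.strong_induction_on generalizing i j with
  | _ N ih =>
    rw [hdp i j]
    cases hM : M i j
    · exact isGreatest_onesSquare_of_false hM
    · by_cases hborder : i.val = 0 ∨ j.val = 0
      · simpa [hborder] using isGreatest_onesSquare_of_border hM hborder
      · have hi : 0 < i.val := by omega
        have hj : 0 < j.val := by omega
        simp only [hborder, if_false, Bool.true_eq_false]
        exact isGreatest_onesSquare_min_add_one hi hj hM
          (ih _ (by simp only [Fin.val_truncSub]; omega) _ _ rfl)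
          (ih _ (by simp only [Fin.val_truncSub]; omega) _ _ rfl)
          (ih _ (by simp only [Fin.val_truncSub]; omega) _ _ rfl)

end Squares

theorem stmt17 {m n : ℕ} (M : Fin m → Fin n → Bool)
    (dp : Fin m → Fin n → ℕ)
    (hdp : ∀ (i : Fin m) (j : Fin n),
      dp i j =
        if M i j = false then 0
        else if i.val = 0 ∨ j.val = 0 then 1
        else
          min (min (dp ⟨i.val - 1, Nat.lt_of_le_of_lt (Nat.sub_le _ _) i.isLt⟩ j)
                   (dp i ⟨j.val - 1, Nat.lt_of_le_of_lt (Nat.sub_le _ _) j.isLt⟩))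
              (dp ⟨i.val - 1, Nat.lt_of_le_of_lt (Nat.sub_le _ _) i.isLt⟩
                  ⟨j.val - 1, Nat.lt_of_le_of_lt (Nat.sub_le _ _) j.isLt⟩) + 1)
    (freq : Fin m → Fin n → ℕ)
    (hfreq : ∀ (i : Fin m) (j : Fin n),
      IsGreatest {l : ℕ | l ≤ i.val + 1 ∧
        ∀ t < l, M ⟨i.val - t, Nat.lt_of_le_of_lt (Nat.sub_le _ _) i.isLt⟩ j = true}
        (freq i j)) :
    ∀ (i : Fin m) (j : Fin n),
      IsGreatest {k : ℕ | k ≤ j.val + 1 ∧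
        ∀ t < k, k ≤ freq i ⟨j.val - t, Nat.lt_of_le_of_lt (Nat.sub_le _ _) j.isLt⟩}
        (dp i j) := by
  intro i j
  have hle_freq (j' : Fin n) (k : ℕ) : k ≤ freq i j' ↔ ColumnRun M i j' k :=
    (hfreq i j').le_iff_mem_of_isLowerSet (isLowerSet_columnRun i j')
  have hset : {k : ℕ | k ≤ j.val + 1 ∧
      ∀ t < k, k ≤ freq i ⟨j.val - t, Nat.lt_of_le_of_lt (Nat.sub_le _ _) j.isLt⟩} =
      {k | OnesSquare M i j k} := by
    ext k
    simp only [Set.mem_ofPred_eq, hle_freq]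
    exact onesSquare_iff_forall_columnRun.symm
  rw [hset]
  exact SquareRecurrence.isGreatest_onesSquare hdp i j
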